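/- The perfect shuffle permutation f on {0,…,2^{m+1}−1} decomposes as f = f_{m,m−1} ∘ ⋯ ∘ f_{2,1} ∘ f_{1,0}, where f_{i,j} is the permutation exchanging binary digits b_i and b_j. -/
import Mathlib

private def gAux (t n : ℕ) : ℕ :=
  (n >>> 1) % 2 ^ t ||| (n % 2 ^ 1) <<< t ||| (n >>> (t + 1)) <<< (t + 1)

private lemma gAux_testBit (t n j : ℕ) : (gAux t n).testBit j =
    if j < t then n.testBit (j + 1) else if j = t then n.testBit 0 else n.testBit j := by
  simp only [gAux, Nat.testBit_or, Nat.testBit_mod_two_pow, Nat.testBit_shiftRight,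
    Nat.testBit_shiftLeft, ge_iff_le]
  rcases lt_trichotomy j t with h | h | h
  · rw [if_pos h, decide_eq_true h, decide_eq_false (by omega : ¬ t ≤ j),
      decide_eq_false (by omega : ¬ t + 1 ≤ j), Nat.add_comm 1 j]
    simp
  · subst h
    simp
  · rw [if_neg (by omega), if_neg (by omega), decide_eq_false (by omega : ¬ j < t),
      decide_eq_true (by omega : t ≤ j), decide_eq_false (by omega : ¬ j - t < 1),
      decide_eq_true (by omega : t + 1 ≤ j), (by omega : t + 1 + (j - (t + 1)) = j)]
    simp

/-- The perfect shuffle decomposes as the composition of adjacent bit-swap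
permutations: f = f_{m,m−1} ∘ ⋯ ∘ f_{2,1} ∘ f_{1,0}. -/
theorem stmt13 (m : ℕ) (f : ℕ → ℕ)
    (hf : ∀ k, f k = if k % 2 = 0 then k / 2 else 2 ^ m + k / 2)
    (swapBit : ℕ → ℕ → ℕ → ℕ)
    (hswap : ∀ i j n, swapBit i j n =
      if Nat.testBit n i = Nat.testBit n j then n else (n ^^^ 2 ^ i) ^^^ 2 ^ j) :
    ∀ k < 2 ^ (m + 1),
      f k = (List.range m).foldl (fun acc i => swapBit (i + 1) i acc) k := by
  intro k hk
  have key : ∀ t, (List.range t).foldl (fun acc i => swapBit (i + 1) i acc) k = gAux t k := by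
    intro t
    induction t with
    | zero =>
      simp only [List.range_zero, List.foldl_nil]
      apply Nat.eq_of_testBit_eq
      intro j
      rw [gAux_testBit]
      rcases Nat.eq_zero_or_pos j with h | h
      · simp [h]
      · rw [if_neg (by omega), if_neg (by omega)]
    | succ t ih =>
      rw [List.range_succ, List.foldl_append, List.foldl_cons, List.foldl_nil, ih, hswap]
      have h1 : (gAux t k).testBit (t + 1) = k.testBit (t + 1) := by
        rw [gAux_testBit, if_neg (by omega), if_neg (by omega)]
      have h2 : (gAux t k).testBit t = k.testBit 0 := by
        rw [gAux_testBit, if_neg (by omega), if_pos rfl]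
      by_cases h : k.testBit (t + 1) = k.testBit 0
      · rw [if_pos (by rw [h1, h2, h])]
        apply Nat.eq_of_testBit_eq
        intro j
        rw [gAux_testBit, gAux_testBit]
        rcases lt_trichotomy j t with hj | hj | hj
        · rw [if_pos hj, if_pos (by omega)]
        · rw [if_neg (by omega), if_pos hj, if_pos (by omega), hj, h]
        · rcases Nat.eq_or_lt_of_le (by omega : t + 1 ≤ j) with hj2 | hj2
          · rw [if_neg (by omega), if_neg (by omega), if_neg (by omega), if_pos hj2.symm,
              ← hj2, h]
          · rw [if_neg (by omega), if_neg (by omega), if_neg (by omega), if_neg (by omega)]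
      · rw [if_neg (by rw [h1, h2]; exact h)]
        apply Nat.eq_of_testBit_eq
        intro j
        rw [Nat.testBit_xor, Nat.testBit_xor, Nat.testBit_two_pow, Nat.testBit_two_pow,
          gAux_testBit, gAux_testBit]
        rcases lt_trichotomy j t with hj | hj | hj
        · rw [if_pos hj, if_pos (by omega), decide_eq_false (by omega : ¬ t + 1 = j),
            decide_eq_false (by omega : ¬ t = j)]
          simp
        · rw [if_neg (by omega), if_pos hj, if_pos (by omega),
            decide_eq_false (by omega : ¬ t + 1 = j), decide_eq_true hj.symm, hj]
          revert h
          cases k.testBit 0 <;> cases k.testBit (t + 1) <;> simp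
        · rcases Nat.eq_or_lt_of_le (by omega : t + 1 ≤ j) with hj2 | hj2
          · rw [← hj2, if_neg (by omega), if_neg (by omega), if_neg (by omega), if_pos rfl,
              decide_eq_true rfl, decide_eq_false (by omega : ¬ t = t + 1)]
            revert h
            cases k.testBit 0 <;> cases k.testBit (t + 1) <;> simp
          · rw [if_neg (by omega), if_neg (by omega), if_neg (by omega), if_neg (by omega),
              decide_eq_false (by omega : ¬ t + 1 = j), decide_eq_false (by omega : ¬ t = j)]
            simp
  rw [key m, hf]
  have hkd : k / 2 < 2 ^ m := by omega
  apply Nat.eq_of_testBit_eq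
  intro j
  rw [gAux_testBit]
  by_cases hp : k % 2 = 0
  · rw [if_pos hp]
    rcases lt_trichotomy j m with hj | hj | hj
    · rw [if_pos hj, Nat.testBit_div_two]
    · subst hj
      rw [if_neg (by omega), if_pos rfl, Nat.testBit_lt_two_pow hkd]
      simp [hp]
    · rw [if_neg (by omega), if_neg (by omega),
        Nat.testBit_lt_two_pow
          (lt_of_lt_of_le hkd (Nat.pow_le_pow_right (by norm_num) (by omega))),
        Nat.testBit_lt_two_pow
          (lt_of_lt_of_le hk (Nat.pow_le_pow_right (by norm_num) (by omega)))]
  · rw [if_neg hp]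
    rcases lt_trichotomy j m with hj | hj | hj
    · rw [if_pos hj, Nat.testBit_two_pow_add_gt hj, Nat.testBit_div_two]
    · subst hj
      rw [if_neg (by omega), if_pos rfl, Nat.testBit_two_pow_add_eq,
        Nat.testBit_lt_two_pow hkd]
      simp [Nat.mod_two_eq_zero_or_one k |>.resolve_left hp]
    · rw [if_neg (by omega), if_neg (by omega),
        Nat.testBit_lt_two_pow
          (lt_of_lt_of_le (by omega : 2 ^ m + k / 2 < 2 ^ (m + 1))
            (Nat.pow_le_pow_right (by norm_num) (by omega))),
        Nat.testBit_lt_two_pow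
          (lt_of_lt_of_le hk (Nat.pow_le_pow_right (by norm_num) (by omega)))]
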